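/- (Lemma 2, pressure estimate.) Fix x* > 0, t₁ > 0 and a sensor location x_m with 0 < x_m ≤ x*, and let u, v : [0,x*] → ℝ be continuous. Then for every t ∈ [t₁, min(τ*_u, τ*_v)], |p^u(x_m, t) − p^v(x_m, t)| ≤ (x*/t₁)·M_{u,v}³·(2x* + C_{u,v})·‖u − v‖, where M_{u,v} = exp(max(‖u‖,‖v‖)) and C_{u,v} = exp((x*)⁴·M_{u,v}⁶/t₁²)·(x*)⁵·M_{u,v}⁶/t₁². -/

import Mathlib

open Set

noncomputable def Fu (xs : ℝ) (h : 0 ≤ xs) (u : C(Icc (0:ℝ) xs, ℝ)) (x : ℝ) : ℝ :=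
  ∫ z in (0:ℝ)..x, Real.exp (-(u (projIcc 0 xs h z)))

noncomputable def Wu (xs : ℝ) (h : 0 ≤ xs) (u : C(Icc (0:ℝ) xs, ℝ)) (x : ℝ) : ℝ :=
  ∫ ξ in (0:ℝ)..x, Fu xs h u ξ

noncomputable def tau (xs : ℝ) (h : 0 ≤ xs) (u : C(Icc (0:ℝ) xs, ℝ)) : ℝ :=
  Wu xs h u xs


/-- Dimensionless pressure, given the moving front `Υ`:
`p(x,t) = 2 - F_u(x)/F_u(Υ(t))` behind the front (`x ≤ Υ t`) and `1` ahead of it. -/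
noncomputable def press (xs : ℝ) (h : 0 ≤ xs) (u : C(Icc (0:ℝ) xs, ℝ)) (Υ : ℝ → ℝ)
    (x t : ℝ) : ℝ :=
  if x ≤ Υ t then 2 - Fu xs h u x / Fu xs h u (Υ t) else 1

/-!
Both pressures have the form `2 - F(min x Υ) / F(Υ)`, so everything reduces to comparing
`F_u, F_v` and the two fronts. The integrand `exp (-u)` lies between `M⁻¹` and `M`, hence
`F_u` is `M`-Lipschitz with slope at least `M⁻¹`, and `|F_u - F_v| ≤ x M ‖u - v‖`. At time
`t ≥ t₁` both fronts are at distance at least `t₁ / (x* M)` from the inlet, which bounds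
`F_u` below there; and since `W_u` has slope `F_u`, the equality `W_u(Υᵘ t) = t = W_v(Υᵛ t)`
turns `|W_u - W_v| ≤ x² M ‖u - v‖` into a bound on the distance between the fronts.
-/

lemma Real.abs_exp_sub_exp_le_of_le {x y R : ℝ} (hx : x ≤ R) (hy : y ≤ R) :
    |Real.exp x - Real.exp y| ≤ Real.exp R * |x - y| := by
  wlog hxy : y ≤ x generalizing x y
  · rw [abs_sub_comm, abs_sub_comm x]
    exact this hy hx (le_of_not_ge hxy)
  have hsplit : Real.exp y = Real.exp x * Real.exp (y - x) := by
    rw [← Real.exp_add]; ring_nf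
  rw [abs_of_nonneg (sub_nonneg.2 (Real.exp_le_exp.2 hxy)), abs_of_nonneg (sub_nonneg.2 hxy),
    hsplit]
  have h1 := Real.add_one_le_exp (y - x)
  have h2 := Real.exp_le_exp.2 hx
  nlinarith [Real.exp_pos x]

lemma intervalIntegral.abs_integral_le_mul_sq {f : ℝ → ℝ} {C : ℝ} (hC : 0 ≤ C)
    (hf : ∀ ξ, |f ξ| ≤ C * |ξ|) (x : ℝ) : |∫ ξ in (0:ℝ)..x, f ξ| ≤ C * x ^ 2 := by
  have hbound : ∀ ξ ∈ uIoc 0 x, ‖f ξ‖ ≤ C * |x| := fun ξ hξ => by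
    have hξx : |ξ| ≤ |x| := by simpa using abs_sub_left_of_mem_uIcc (uIoc_subset_uIcc hξ)
    exact (hf ξ).trans (mul_le_mul_of_nonneg_left hξx hC)
  calc |∫ ξ in (0:ℝ)..x, f ξ| ≤ C * |x| * |x - 0| := norm_integral_le_of_norm_le_const hbound
    _ = C * x ^ 2 := by rw [sub_zero, mul_assoc, abs_mul_abs_self, sq]

lemma ContinuousMap.abs_apply_le_norm {X : Type*} [TopologicalSpace X] [CompactSpace X]
    (f : C(X, ℝ)) (x : X) : |f x| ≤ ‖f‖ :=
  f.norm_coe_le_norm x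

lemma abs_div_sub_div_le {p q p' q' : ℝ} (hq : 0 < q) (hp' : 0 ≤ p') (hpq' : p' ≤ q') :
    |p / q - p' / q'| ≤ (|p - p'| + |q - q'|) / q := by
  have hr : 0 ≤ p' / q' := div_nonneg hp' (hp'.trans hpq')
  have hr1 : p' / q' ≤ 1 := div_le_one_of_le₀ hpq' (hp'.trans hpq')
  have hsplit : p / q - p' / q' = (p - p') / q + p' / q' * (q' - q) / q := by
    rcases (hp'.trans hpq').eq_or_lt with hq' | hq'
    · rw [← hq', le_antisymm (hpq'.trans hq'.ge) hp']; simp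
    · field_simp; ring
  rw [hsplit, add_div]
  refine (abs_add_le _ _).trans (add_le_add (le_of_eq ?_) ?_)
  · rw [abs_div, abs_of_pos hq]
  · rw [abs_div, abs_mul, abs_of_pos hq, abs_of_nonneg hr, abs_sub_comm]
    gcongr
    exact mul_le_of_le_one_left (abs_nonneg _) hr1

lemma two_mul_le_exp_sq_mul_sq {r : ℝ} (hr : 1 ≤ r) : 2 * r ≤ Real.exp (r ^ 2) * r ^ 2 := by
  have hr2 : r ≤ r ^ 2 := by nlinarith
  calc 2 * r ≤ (r ^ 2 + 1) * r ^ 2 := by nlinarith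
    _ ≤ Real.exp (r ^ 2) * r ^ 2 := by gcongr; exact Real.add_one_le_exp _

/-- The paper's Gronwall factor `exp (x*⁴ M⁶ / t₁²)` enters only through `exp (r²) r² ≥ 2 r`,
where `r = x*² M³ / t₁ ≥ 1`. -/
lemma pressure_bound_of_front_estimates {xs t₁ M ε δ c Q : ℝ} (hxs : 0 < xs) (ht₁ : 0 < t₁)
    (hM : 1 ≤ M) (hε : 0 ≤ ε) (hc : t₁ ≤ xs * M * c) (hcxs : c ≤ xs) (hcQ : c ≤ M * Q)
    (hδ : δ * Q ≤ M * ε * xs ^ 2) :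
    2 * (M * δ + xs * M * ε) / Q ≤
      xs / t₁ * M ^ 3 * (2 * xs + Real.exp (xs ^ 4 * M ^ 6 / t₁ ^ 2) * (xs ^ 5 * M ^ 6 / t₁ ^ 2)) *
        ε := by
  have hM0 : 0 < M := one_pos.trans_le hM
  have hQ : t₁ ≤ xs * M ^ 2 * Q :=
    hc.trans (by nlinarith [mul_le_mul_of_nonneg_left hcQ (mul_pos hxs hM0).le])
  have hQ0 : 0 < Q := pos_of_mul_pos_right (ht₁.trans_le hQ) (by positivity)
  have hinv : 1 / Q ≤ xs * M ^ 2 / t₁ := by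
    rw [div_le_div_iff₀ hQ0 ht₁]; linarith
  have hr : 1 ≤ xs ^ 2 * M ^ 3 / t₁ := by
    rw [le_div_iff₀ ht₁]
    nlinarith [mul_le_mul_of_nonneg_left hcxs (mul_pos hxs hM0).le,
      mul_le_mul_of_nonneg_left (pow_le_pow_right₀ hM (by norm_num : 1 ≤ 3)) (sq_nonneg xs)]
  calc 2 * (M * δ + xs * M * ε) / Q = 2 * M * (δ * Q) * (1 / Q) ^ 2 + 2 * xs * M * ε * (1 / Q) := by
        field_simp
    _ ≤ 2 * M * (M * ε * xs ^ 2) * (xs * M ^ 2 / t₁) ^ 2 + 2 * xs * M * ε * (xs * M ^ 2 / t₁) := by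
        gcongr
    _ = xs ^ 2 * M ^ 3 * ε / t₁ * (2 * (xs ^ 2 * M ^ 3 / t₁) + 2) := by
        field_simp
    _ ≤ xs ^ 2 * M ^ 3 * ε / t₁ *
          (Real.exp ((xs ^ 2 * M ^ 3 / t₁) ^ 2) * (xs ^ 2 * M ^ 3 / t₁) ^ 2 + 2) := by
        gcongr _ * (?_ + 2); exact two_mul_le_exp_sq_mul_sq hr
    _ = _ := by
        rw [div_pow, mul_pow, ← pow_mul, ← pow_mul]
        field_simp; ring

section Profiles

variable {xs : ℝ} (h : 0 ≤ xs) (u v : C(Icc (0:ℝ) xs, ℝ)) {R : ℝ}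

lemma continuous_exp_neg_comp_projIcc :
    Continuous fun z => Real.exp (-(u (projIcc 0 xs h z))) :=
  Real.continuous_exp.comp (u.continuous.comp continuous_projIcc).neg

lemma Fu_sub_Fu (a b : ℝ) :
    Fu xs h u b - Fu xs h u a = ∫ z in a..b, Real.exp (-(u (projIcc 0 xs h z))) :=
  intervalIntegral.integral_interval_sub_left
    ((continuous_exp_neg_comp_projIcc h u).intervalIntegrable 0 b)
    ((continuous_exp_neg_comp_projIcc h u).intervalIntegrable 0 a)

lemma Fu_zero : Fu xs h u 0 = 0 := intervalIntegral.integral_same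

lemma abs_Fu_sub_Fu_le_mul_abs (hu : ‖u‖ ≤ R) (x y : ℝ) :
    |Fu xs h u x - Fu xs h u y| ≤ Real.exp R * |x - y| := by
  rw [Fu_sub_Fu, ← Real.norm_eq_abs]
  refine intervalIntegral.norm_integral_le_of_norm_le_const fun z _ => ?_
  rw [Real.norm_eq_abs, Real.abs_exp]
  exact Real.exp_le_exp.2 ((neg_le_abs _).trans ((u.abs_apply_le_norm _).trans hu))

lemma sub_le_exp_mul_Fu_sub_Fu (hu : ‖u‖ ≤ R) {a b : ℝ} (hab : a ≤ b) :
    b - a ≤ Real.exp R * (Fu xs h u b - Fu xs h u a) := by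
  have hlow : ∀ z, Real.exp (-R) ≤ Real.exp (-(u (projIcc 0 xs h z))) := fun z =>
    Real.exp_le_exp.2 (neg_le_neg ((le_abs_self _).trans ((u.abs_apply_le_norm _).trans hu)))
  have hint : (b - a) * Real.exp (-R) ≤ Fu xs h u b - Fu xs h u a := by
    rw [Fu_sub_Fu, ← smul_eq_mul, ← intervalIntegral.integral_const]
    exact intervalIntegral.integral_mono_on hab intervalIntegrable_const
      ((continuous_exp_neg_comp_projIcc h u).intervalIntegrable a b) fun z _ => hlow z
  calc b - a = Real.exp R * ((b - a) * Real.exp (-R)) := by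
        rw [Real.exp_neg]; field_simp
    _ ≤ Real.exp R * (Fu xs h u b - Fu xs h u a) := by gcongr

lemma Fu_monotone : Monotone (Fu xs h u) := fun a b hab => by
  have := sub_le_exp_mul_Fu_sub_Fu h u le_rfl hab
  nlinarith [Real.exp_pos ‖u‖]

lemma le_exp_mul_Fu (hu : ‖u‖ ≤ R) {x : ℝ} (hx : 0 ≤ x) : x ≤ Real.exp R * Fu xs h u x := by
  simpa [Fu_zero] using sub_le_exp_mul_Fu_sub_Fu h u hu hx

lemma Fu_pos {x : ℝ} (hx : 0 < x) : 0 < Fu xs h u x :=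
  pos_of_mul_pos_right (hx.trans_le (le_exp_mul_Fu h u le_rfl hx.le)) (Real.exp_pos _).le

lemma abs_Fu_sub_Fu_le_mul_norm (hu : ‖u‖ ≤ R) (hv : ‖v‖ ≤ R) (x : ℝ) :
    |Fu xs h u x - Fu xs h v x| ≤ Real.exp R * ‖u - v‖ * |x| := by
  rw [Fu, Fu, ← intervalIntegral.integral_sub
    ((continuous_exp_neg_comp_projIcc h u).intervalIntegrable 0 x)
    ((continuous_exp_neg_comp_projIcc h v).intervalIntegrable 0 x)]
  have hbound : ∀ z, ‖Real.exp (-(u (projIcc 0 xs h z))) - Real.exp (-(v (projIcc 0 xs h z)))‖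
      ≤ Real.exp R * ‖u - v‖ := fun z => by
    set y := projIcc 0 xs h z
    have hdiff : |-(u y) - -(v y)| ≤ ‖u - v‖ := by
      rw [neg_sub_neg, abs_sub_comm]
      exact (u - v).abs_apply_le_norm y
    exact (Real.abs_exp_sub_exp_le_of_le ((neg_le_abs _).trans ((u.abs_apply_le_norm y).trans hu))
      ((neg_le_abs _).trans ((v.abs_apply_le_norm y).trans hv))).trans (by gcongr)
  simpa using intervalIntegral.norm_integral_le_of_norm_le_const (a := 0) (b := x)
    fun z _ => hbound z

lemma abs_Fu_sub_Fu_le_add (hu : ‖u‖ ≤ R) (hv : ‖v‖ ≤ R) {a b : ℝ} (hb : |b| ≤ xs) :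
    |Fu xs h u a - Fu xs h v b| ≤ Real.exp R * |a - b| + xs * Real.exp R * ‖u - v‖ := by
  calc |Fu xs h u a - Fu xs h v b|
      ≤ |Fu xs h u a - Fu xs h u b| + |Fu xs h u b - Fu xs h v b| := abs_sub_le _ _ _
    _ ≤ Real.exp R * |a - b| + Real.exp R * ‖u - v‖ * xs := by
        gcongr
        · exact abs_Fu_sub_Fu_le_mul_abs h u hu a b
        · exact (abs_Fu_sub_Fu_le_mul_norm h u v hu hv b).trans (by gcongr)
    _ = Real.exp R * |a - b| + xs * Real.exp R * ‖u - v‖ := by ring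

lemma continuous_Fu : Continuous (Fu xs h u) :=
  intervalIntegral.continuous_primitive
    (fun a b => (continuous_exp_neg_comp_projIcc h u).intervalIntegrable a b) 0

lemma sub_mul_Fu_le_Wu_sub_Wu {a b : ℝ} (hab : a ≤ b) :
    (b - a) * Fu xs h u a ≤ Wu xs h u b - Wu xs h u a := by
  rw [Wu, Wu, intervalIntegral.integral_interval_sub_left
    ((continuous_Fu h u).intervalIntegrable 0 b) ((continuous_Fu h u).intervalIntegrable 0 a),
    ← smul_eq_mul, ← intervalIntegral.integral_const]
  exact intervalIntegral.integral_mono_on hab intervalIntegrable_const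
    ((continuous_Fu h u).intervalIntegrable a b) fun ξ hξ => Fu_monotone h u hξ.1

lemma abs_sub_mul_Fu_min_le (a b : ℝ) :
    |a - b| * Fu xs h u (min a b) ≤ |Wu xs h u a - Wu xs h u b| := by
  rcases le_total a b with hab | hab
  · rw [min_eq_left hab, abs_sub_comm a, abs_sub_comm (Wu xs h u a),
      abs_of_nonneg (sub_nonneg.2 hab)]
    exact (sub_mul_Fu_le_Wu_sub_Wu h u hab).trans (le_abs_self _)
  · rw [min_eq_right hab, abs_of_nonneg (sub_nonneg.2 hab)]
    exact (sub_mul_Fu_le_Wu_sub_Wu h u hab).trans (le_abs_self _)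

lemma Wu_le_exp_mul_sq (hu : ‖u‖ ≤ R) (x : ℝ) : Wu xs h u x ≤ Real.exp R * x ^ 2 :=
  (le_abs_self _).trans <| intervalIntegral.abs_integral_le_mul_sq (Real.exp_pos R).le
    (fun ξ => by simpa [Fu_zero] using abs_Fu_sub_Fu_le_mul_abs h u hu ξ 0) x

lemma abs_Wu_sub_Wu_le (hu : ‖u‖ ≤ R) (hv : ‖v‖ ≤ R) (x : ℝ) :
    |Wu xs h u x - Wu xs h v x| ≤ Real.exp R * ‖u - v‖ * x ^ 2 := by
  rw [Wu, Wu, ← intervalIntegral.integral_sub ((continuous_Fu h u).intervalIntegrable 0 x)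
    ((continuous_Fu h v).intervalIntegrable 0 x)]
  exact intervalIntegral.abs_integral_le_mul_sq (by positivity)
    (abs_Fu_sub_Fu_le_mul_norm h u v hu hv) x

lemma le_mul_min_of_Wu_eq (hu : ‖u‖ ≤ R) (hv : ‖v‖ ≤ R) {a b t : ℝ} (ha : a ∈ Icc 0 xs)
    (hb : b ∈ Icc 0 xs) (hWa : Wu xs h u a = t) (hWb : Wu xs h v b = t) :
    t ≤ xs * Real.exp R * min a b := by
  have hfront : ∀ (w : C(Icc (0:ℝ) xs, ℝ)) {c}, ‖w‖ ≤ R → c ∈ Icc 0 xs →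
      Wu xs h w c ≤ xs * Real.exp R * c := fun w c hw hc =>
    calc Wu xs h w c ≤ Real.exp R * c ^ 2 := Wu_le_exp_mul_sq h w hw c
      _ = Real.exp R * c * c := by ring
      _ ≤ Real.exp R * c * xs := by gcongr; exacts [mul_nonneg (Real.exp_pos R).le hc.1, hc.2]
      _ = xs * Real.exp R * c := by ring
  rw [mul_min_of_nonneg _ _ (by positivity)]
  exact le_min (hWa ▸ hfront u hu ha) (hWb ▸ hfront v hv hb)

lemma abs_sub_mul_Fu_min_le_of_Wu_eq (hu : ‖u‖ ≤ R) (hv : ‖v‖ ≤ R) {a b t : ℝ}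
    (hb : b ∈ Icc 0 xs) (hWa : Wu xs h u a = t) (hWb : Wu xs h v b = t) :
    |a - b| * Fu xs h u (min a b) ≤ Real.exp R * ‖u - v‖ * xs ^ 2 :=
  calc |a - b| * Fu xs h u (min a b) ≤ |Wu xs h u a - Wu xs h u b| :=
        abs_sub_mul_Fu_min_le h u a b
    _ = |Wu xs h u b - Wu xs h v b| := by rw [hWa, ← hWb, abs_sub_comm]
    _ ≤ Real.exp R * ‖u - v‖ * b ^ 2 := abs_Wu_sub_Wu_le h u v hu hv b
    _ ≤ Real.exp R * ‖u - v‖ * xs ^ 2 := by gcongr; exacts [hb.1, hb.2]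

lemma press_eq_two_sub_div {Υ : ℝ → ℝ} {x t : ℝ} (hF : Fu xs h u (Υ t) ≠ 0) :
    press xs h u Υ x t = 2 - Fu xs h u (min x (Υ t)) / Fu xs h u (Υ t) := by
  rcases le_or_gt x (Υ t) with hx | hx
  · rw [press, if_pos hx, min_eq_left hx]
  · rw [press, if_neg hx.not_ge, min_eq_right hx.le, div_self hF]
    norm_num

lemma abs_press_sub_press_le (hu : ‖u‖ ≤ R) (hv : ‖v‖ ≤ R) {Υu Υv : ℝ → ℝ} {x t : ℝ}
    (hx : x ∈ Icc 0 xs) (hb : Υv t ≤ xs) (hc : 0 < min (Υu t) (Υv t)) :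
    |press xs h u Υu x t - press xs h v Υv x t| ≤
      2 * (Real.exp R * |Υu t - Υv t| + xs * Real.exp R * ‖u - v‖) /
        Fu xs h u (min (Υu t) (Υv t)) := by
  set a := Υu t
  set b := Υv t
  have hb0 : 0 < b := hc.trans_le (min_le_right a b)
  have hQ : 0 < Fu xs h u (min a b) := Fu_pos h u hc
  have hFa : Fu xs h u (min a b) ≤ Fu xs h u a := Fu_monotone h u (min_le_left a b)
  have hFb : 0 < Fu xs h v b := Fu_pos h v hb0
  have hmin : |min x a - min x b| ≤ |a - b| := by
    simpa using abs_min_sub_min_le_max x a x b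
  have hp := abs_Fu_sub_Fu_le_add h u v hu hv (a := min x a)
    (abs_le.2 ⟨by linarith [le_min hx.1 hb0.le], (min_le_left x b).trans hx.2⟩)
  have hq := abs_Fu_sub_Fu_le_add h u v hu hv (a := a) (abs_le.2 ⟨by linarith, hb⟩)
  rw [press_eq_two_sub_div h u (hQ.trans_le hFa).ne', press_eq_two_sub_div h v hFb.ne',
    sub_sub_sub_cancel_left, abs_sub_comm]
  calc _ ≤ (|Fu xs h u (min x a) - Fu xs h v (min x b)| + |Fu xs h u a - Fu xs h v b|) /
        Fu xs h u a :=
        abs_div_sub_div_le (hQ.trans_le hFa)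
          ((Fu_zero h v).symm.trans_le (Fu_monotone h v (le_min hx.1 hb0.le)))
          (Fu_monotone h v (min_le_right x b))
    _ ≤ _ := by
        gcongr ?_ / ?_
        linarith [mul_le_mul_of_nonneg_left hmin (Real.exp_pos R).le]

end Profiles

/-- Lemma 2, pressure estimate: for `t ∈ [t₁, min(τ*_u, τ*_v)]` and a
sensor location `0 < x_m ≤ x*`,
`|p^u(x_m,t) - p^v(x_m,t)| ≤ (x*/t₁)·M³·(2x* + C_{u,v})·‖u - v‖`. -/
theorem stmt_12 (xs : ℝ) (hxs : 0 < xs) (t₁ : ℝ) (ht₁ : 0 < t₁)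
    (xm : ℝ) (hxm0 : 0 < xm) (hxm : xm ≤ xs)
    (u v : C(Icc (0:ℝ) xs, ℝ)) (Υu Υv : ℝ → ℝ)
    (hΥu : ∀ s ∈ Icc (0:ℝ) (tau xs hxs.le u), Υu s ∈ Icc 0 xs ∧ Wu xs hxs.le u (Υu s) = s)
    (hΥv : ∀ s ∈ Icc (0:ℝ) (tau xs hxs.le v), Υv s ∈ Icc 0 xs ∧ Wu xs hxs.le v (Υv s) = s)
    (t : ℝ) (ht : t ∈ Icc t₁ (min (tau xs hxs.le u) (tau xs hxs.le v))) :
    |press xs hxs.le u Υu xm t - press xs hxs.le v Υv xm t| ≤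
      xs / t₁ * Real.exp (max ‖u‖ ‖v‖) ^ 3 *
        (2 * xs +
          Real.exp (xs ^ 4 * Real.exp (max ‖u‖ ‖v‖) ^ 6 / t₁ ^ 2) *
            (xs ^ 5 * Real.exp (max ‖u‖ ‖v‖) ^ 6 / t₁ ^ 2)) * ‖u - v‖ := by
  obtain ⟨ht₁t, htmin⟩ := ht
  have ht0 : 0 ≤ t := ht₁.le.trans ht₁t
  obtain ⟨ha, hWa⟩ := hΥu t ⟨ht0, htmin.trans (min_le_left _ _)⟩
  obtain ⟨hb, hWb⟩ := hΥv t ⟨ht0, htmin.trans (min_le_right _ _)⟩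
  have hu : ‖u‖ ≤ max ‖u‖ ‖v‖ := le_max_left _ _
  have hv : ‖v‖ ≤ max ‖u‖ ‖v‖ := le_max_right _ _
  have hc : t₁ ≤ xs * Real.exp (max ‖u‖ ‖v‖) * min (Υu t) (Υv t) :=
    ht₁t.trans (le_mul_min_of_Wu_eq hxs.le u v hu hv ha hb hWa hWb)
  have hc0 : 0 < min (Υu t) (Υv t) := pos_of_mul_pos_right (ht₁.trans_le hc) (by positivity)
  exact (abs_press_sub_press_le hxs.le u v hu hv ⟨hxm0.le, hxm⟩ hb.2 hc0).trans <|
    pressure_bound_of_front_estimates hxs ht₁ (Real.one_le_exp (le_max_of_le_left (norm_nonneg u)))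
      (norm_nonneg _) hc ((min_le_left _ _).trans ha.2) (le_exp_mul_Fu hxs.le u hu hc0.le)
      (abs_sub_mul_Fu_min_le_of_Wu_eq hxs.le u v hu hv hb hWa hWb)
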